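/- Let Γ be a Fuchsian group (a discrete subgroup of PSL(2,ℝ)) acting on the upper half-plane ℍ, let π : ℍ → X = Γ\ℍ be the quotient map onto the space of Γ-orbits, and let M ∈ PSL(2,ℝ) with M ∉ Γ. Set Γ^M = M⁻¹ΓM and G = Γ ∩ Γ^M. Suppose X₀ is an uncountable subset of X, and define N = sup_{x ∈ X₀} #{π(Mτ) : τ ∈ π⁻¹(x)}. Then N is finite if and only if the index |Γ : G| is finite, and in that case N = |Γ : G|. -/

import Mathlib

/-!
Write `G = Γ ∩ M⁻¹ΓM` and `x = π τ₀`. The map `γG ↦ π(M γ⁻¹ τ₀)` from `Γ/G` onto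
`{π(Mτ) : τ ∈ π⁻¹(x)}` is well defined and surjective, so every such set has at most `|Γ : G|`
elements. It is injective unless `γ₁ M⁻¹ δ M γ₂⁻¹ τ₀ = τ₀` for some `γ₁, δ, γ₂ ∈ Γ` with
`γ₁ M⁻¹ δ M γ₂⁻¹ ≠ 1`. A discrete `Γ` is countable and a nontrivial Möbius transformation has
at most two fixed points in `ℍ`, so these exceptional `τ₀` form a countable set, and the
uncountable set `X₀` contains an orbit where the bound is attained.
-/

open scoped MatrixGroups
open UpperHalfPlane Matrix

/-- Every element of the center of `SL(2, ℝ)` acts trivially on the upper half-plane. -/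
theorem center_smul_trivial (A : Matrix.SpecialLinearGroup (Fin 2) ℝ)
    (hA : A ∈ Subgroup.center (Matrix.SpecialLinearGroup (Fin 2) ℝ)) (z : ℍ) : A • z = z := by
  obtain ⟨r, hr, hrA⟩ := Matrix.SpecialLinearGroup.mem_center_iff.mp hA
  have hr0 : (r : ℂ) ≠ 0 := by
    intro h
    rw [show r = (0:ℝ) from by exact_mod_cast h] at hr
    norm_num at hr
  have h00 : (A : Matrix (Fin 2) (Fin 2) ℝ) 0 0 = r := by rw [← hrA]; simp
  have h01 : (A : Matrix (Fin 2) (Fin 2) ℝ) 0 1 = 0 := by rw [← hrA]; simp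
  have h10 : (A : Matrix (Fin 2) (Fin 2) ℝ) 1 0 = 0 := by rw [← hrA]; simp
  have h11 : (A : Matrix (Fin 2) (Fin 2) ℝ) 1 1 = r := by rw [← hrA]; simp
  ext
  rw [UpperHalfPlane.specialLinearGroup_apply]
  simp only [UpperHalfPlane.coe_mk, h00, h01, h10, h11, map_zero, Complex.ofReal_zero,
    zero_mul, add_zero, zero_add, Algebra.algebraMap_self, RingHom.id_apply]
  field_simp

/-- The action of `PSL(2, ℝ) = SL(2, ℝ)/{±I}` on the upper half-plane by Möbius
transformations, descended from the action of `SL(2, ℝ)`. -/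
noncomputable instance PSL.mulActionUpperHalfPlane : MulAction PSL(2, ℝ) ℍ :=
  MulAction.compHom ℍ <|
    QuotientGroup.lift (Subgroup.center _)
      (MulAction.toPermHom (Matrix.SpecialLinearGroup (Fin 2) ℝ) ℍ)
      (fun A hA => Equiv.ext fun z => center_smul_trivial A hA z)

/-- The topology on `SL(2, ℝ)` (as a subspace of the space of matrices). -/
noncomputable instance : TopologicalSpace (Matrix.SpecialLinearGroup (Fin 2) ℝ) :=
  instTopologicalSpaceSubtype

open MulAction

theorem Subgroup.countable_closure {G : Type*} [Group G] {s : Set G} (hs : s.Countable) :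
    (closure s : Set G).Countable := by
  have := hs.to_subtype
  rw [FreeGroup.closure_eq_range, MonoidHom.coe_range]
  exact Set.countable_range _

theorem Subgroup.enatCard_quotient_ne_top_iff {G : Type*} [Group G] {H : Subgroup G} :
    ENat.card (G ⧸ H) ≠ ⊤ ↔ H.index ≠ 0 := by
  rw [Subgroup.index_ne_zero_iff_finite, Ne, ENat.card_eq_top, not_infinite_iff_finite]

theorem Subgroup.enatCard_quotient_eq_index {G : Type*} [Group G] {H : Subgroup G}
    (hH : H.index ≠ 0) : ENat.card (G ⧸ H) = H.index :=
  have := Subgroup.index_ne_zero_iff_finite.mp hH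
  ENat.card_eq_coe_natCard _

theorem exists_apply_mem_forall_smul_eq_self_imp_eq_one {P X Y : Type*} [Monoid P] [MulAction P X]
    {s : Set P} (hs : s.Countable) (hfix : ∀ g ∈ s, g ≠ 1 → {x : X | g • x = x}.Countable)
    {π : X → Y} (hπ : Function.Surjective π) {Y₀ : Set Y} (hY₀ : ¬ Y₀.Countable) :
    ∃ x, π x ∈ Y₀ ∧ ∀ g ∈ s, g • x = x → g = 1 := by
  set bad : Set X := ⋃ g ∈ s \ {1}, {x | g • x = x}
  have hbad : bad.Countable := (hs.mono Set.sdiff_subset).biUnion fun g hg => hfix g hg.1 hg.2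
  obtain ⟨y, hyY₀, hy⟩ := Set.not_subset.mp fun h => hY₀ ((hbad.image π).mono h)
  obtain ⟨x, rfl⟩ := hπ y
  refine ⟨x, hyY₀, fun g hg hgx => by_contra fun hg1 => hy ⟨x, ?_, rfl⟩⟩
  exact Set.mem_biUnion (x := g) ⟨hg, hg1⟩ hgx

section Hecke

variable {P X : Type*} [Group P] [MulAction P X] (Γ : Subgroup P) (M : P)

theorem Subgroup.mk_orbitRel_eq_mk_iff {x y : X} :
    Quotient.mk (orbitRel Γ X) x = Quotient.mk (orbitRel Γ X) y ↔ ∃ δ ∈ Γ, δ • y = x := by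
  rw [Quotient.eq, orbitRel_apply, mem_orbit_iff, Subtype.exists]
  simp only [Subgroup.mk_smul, exists_prop]

def heckeSubgroup : Subgroup P :=
  Γ ⊓ Γ.map (MulAut.conj M⁻¹).toMonoidHom

def heckeImage (x : Quotient (orbitRel Γ X)) : Set (Quotient (orbitRel Γ X)) :=
  (fun τ => Quotient.mk (orbitRel Γ X) (M • τ)) '' (Quotient.mk (orbitRel Γ X) ⁻¹' {x})

variable {Γ M}

theorem mem_heckeSubgroup_iff {g : P} : g ∈ heckeSubgroup Γ M ↔ g ∈ Γ ∧ M * g * M⁻¹ ∈ Γ := by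
  rw [heckeSubgroup, Subgroup.mem_inf, Subgroup.mem_map_equiv]
  simp only [map_inv, MulAut.inv_symm, MulAut.conj_apply]

variable (Γ M)

def heckeMap (τ₀ : X) : Γ ⧸ (heckeSubgroup Γ M).subgroupOf Γ → Quotient (orbitRel Γ X) :=
  Quotient.lift (fun γ : Γ => Quotient.mk (orbitRel Γ X) (M • ((γ : P)⁻¹ • τ₀))) <| by
    intro γ₁ γ₂ h
    obtain ⟨-, hconj⟩ := mem_heckeSubgroup_iff.mp
      (Subgroup.mem_subgroupOf.mp (QuotientGroup.leftRel_apply.mp h))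
    refine (Subgroup.mk_orbitRel_eq_mk_iff Γ).mpr ⟨_, hconj, ?_⟩
    simp only [smul_smul, Subgroup.coe_mul, Subgroup.coe_inv]
    group

theorem range_heckeMap (τ₀ : X) :
    Set.range (heckeMap Γ M τ₀) = heckeImage Γ M (Quotient.mk (orbitRel Γ X) τ₀) := by
  ext y
  constructor
  · rintro ⟨q, rfl⟩
    induction q using Quotient.inductionOn with | h γ =>
    exact ⟨(γ : P)⁻¹ • τ₀,
      (Subgroup.mk_orbitRel_eq_mk_iff Γ).mpr ⟨(γ : P)⁻¹, Γ.inv_mem γ.2, rfl⟩, rfl⟩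
  · rintro ⟨τ, hτ, rfl⟩
    obtain ⟨γ, hγ, rfl⟩ := (Subgroup.mk_orbitRel_eq_mk_iff Γ).mp hτ
    exact ⟨Quotient.mk _ ⟨γ, hγ⟩⁻¹, by simp [heckeMap]⟩

theorem heckeMap_injective {H : Subgroup P} (hΓH : Γ ≤ H) (hMH : M ∈ H) {τ₀ : X}
    (hfree : ∀ g ∈ H, g • τ₀ = τ₀ → g = 1) : Function.Injective (heckeMap Γ M τ₀) := by
  intro q₁ q₂ h
  induction q₁ using Quotient.inductionOn with | h γ₁ =>
  induction q₂ using Quotient.inductionOn with | h γ₂ =>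
  obtain ⟨δ, hδ, hδγ⟩ := (Subgroup.mk_orbitRel_eq_mk_iff Γ).mp h
  have hg : (γ₁ : P) * M⁻¹ * δ * M * (γ₂ : P)⁻¹ = 1 := by
    refine hfree _ ?_ ?_
    · exact H.mul_mem (H.mul_mem (H.mul_mem (H.mul_mem (hΓH γ₁.2) (H.inv_mem hMH)) (hΓH hδ))
        hMH) (H.inv_mem (hΓH γ₂.2))
    · simp only [mul_smul, hδγ, smul_inv_smul, inv_smul_smul]
  refine Quotient.sound (QuotientGroup.leftRel_apply.mpr (Subgroup.mem_subgroupOf.mpr ?_))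
  refine mem_heckeSubgroup_iff.mpr ⟨(γ₁⁻¹ * γ₂).2, ?_⟩
  have hδ' : δ = M * ((γ₁ : P)⁻¹ * γ₂) * M⁻¹ :=
    calc δ = M * (γ₁ : P)⁻¹ * ((γ₁ : P) * M⁻¹ * δ * M * (γ₂ : P)⁻¹) * γ₂ * M⁻¹ := by group
      _ = M * ((γ₁ : P)⁻¹ * γ₂) * M⁻¹ := by rw [hg]; group
  simpa [hδ'] using hδ

theorem encard_heckeImage_le (x : Quotient (orbitRel Γ X)) :
    (heckeImage Γ M x).encard ≤ ENat.card (Γ ⧸ (heckeSubgroup Γ M).subgroupOf Γ) := by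
  induction x using Quotient.inductionOn with | h τ₀ =>
  rw [← range_heckeMap, ← Set.image_univ, ← Set.encard_univ]
  exact Set.encard_image_le _ _

theorem iSup_encard_heckeImage_eq {H : Subgroup P} (hΓH : Γ ≤ H) (hMH : M ∈ H) {τ₀ : X}
    (hfree : ∀ g ∈ H, g • τ₀ = τ₀ → g = 1) {X₀ : Set (Quotient (orbitRel Γ X))}
    (hτ₀ : Quotient.mk (orbitRel Γ X) τ₀ ∈ X₀) :
    ⨆ x ∈ X₀, (heckeImage Γ M x).encard = ENat.card (Γ ⧸ (heckeSubgroup Γ M).subgroupOf Γ) := by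
  refine le_antisymm (iSup₂_le fun x _ => encard_heckeImage_le Γ M x) (le_iSup₂_of_le _ hτ₀ ?_)
  rw [← range_heckeMap, ← Set.image_univ, (heckeMap_injective Γ M hΓH hMH hfree).encard_image,
    Set.encard_univ]

end Hecke

-- `A • τ = τ` means `a τ + b = τ (c τ + d)`.
noncomputable def fixedPointPoly (A : SL(2, ℝ)) : Polynomial ℂ :=
  .C (A 1 0 : ℂ) * .X ^ 2 + .C ((A 1 1 : ℂ) - A 0 0) * .X - .C (A 0 1 : ℂ)

theorem fixedPointPoly_isRoot {A : SL(2, ℝ)} {τ : ℍ} (h : A • τ = τ) :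
    (fixedPointPoly A).IsRoot τ := by
  have hden : (A 1 0 : ℂ) * τ + A 1 1 ≠ 0 :=
    UpperHalfPlane.denom_ne_zero (Matrix.SpecialLinearGroup.mapGL ℝ A) τ
  have hτ := congrArg ((↑) : ℍ → ℂ) h
  rw [UpperHalfPlane.coe_specialLinearGroup_apply] at hτ
  simp only [Algebra.algebraMap_self, RingHom.id_apply] at hτ
  rw [div_eq_iff hden] at hτ
  simp only [fixedPointPoly, Polynomial.IsRoot, Polynomial.eval_sub, Polynomial.eval_add,
    Polynomial.eval_mul, Polynomial.eval_pow, Polynomial.eval_C, Polynomial.eval_X]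
  linear_combination -hτ

theorem fixedPointPoly_ne_zero {A : SL(2, ℝ)} (hA : A ∉ Subgroup.center SL(2, ℝ)) :
    fixedPointPoly A ≠ 0 := by
  intro h
  have hc : A 1 0 = 0 := by
    simpa [fixedPointPoly] using congrArg (Polynomial.coeff · 2) h
  have hda : A 1 1 = A 0 0 := by
    simpa [fixedPointPoly, sub_eq_zero] using congrArg (Polynomial.coeff · 1) h
  have hb : A 0 1 = 0 := by
    simpa [fixedPointPoly] using congrArg (Polynomial.coeff · 0) h
  refine hA (Matrix.SpecialLinearGroup.mem_center_iff.mpr ⟨A 0 0, ?_, ?_⟩)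
  · have := A.det_coe
    rw [Matrix.det_fin_two, hc, hda, hb] at this
    simpa [sq] using this
  · ext i j
    fin_cases i <;> fin_cases j <;> simp [hc, hda, hb]

theorem PSL.finite_setOf_smul_eq_self {g : PSL(2, ℝ)} (hg : g ≠ 1) :
    {τ : ℍ | g • τ = τ}.Finite := by
  obtain ⟨A, rfl⟩ := QuotientGroup.mk_surjective g
  have hA : A ∉ Subgroup.center SL(2, ℝ) := fun h => hg ((QuotientGroup.eq_one_iff A).mpr h)
  refine ((Polynomial.finite_setOfPred_isRoot (fixedPointPoly_ne_zero hA)).preimage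
    UpperHalfPlane.coe_injective.injOn).subset fun τ hτ => ?_
  exact fixedPointPoly_isRoot hτ

theorem PSL.countable_of_discreteTopology (Γ : Subgroup PSL(2, ℝ)) [DiscreteTopology Γ] :
    (Γ : Set PSL(2, ℝ)).Countable := by
  have : ContinuousMul SL(2, ℝ) := Matrix.SpecialLinearGroup.topologicalGroup.toContinuousMul
  have : SecondCountableTopology (Matrix (Fin 2) (Fin 2) ℝ) :=
    inferInstanceAs (SecondCountableTopology (Fin 2 → Fin 2 → ℝ))
  have : SecondCountableTopology SL(2, ℝ) :=
    TopologicalSpace.secondCountableTopology_induced _ _ Subtype.val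
  exact Set.countable_coe_iff.mp (TopologicalSpace.separableSpace_iff_countable.mp inferInstance)

theorem finiteness_criterion_fuchsian
    (Γ : Subgroup PSL(2, ℝ)) [DiscreteTopology Γ]
    (M : PSL(2, ℝ))
    (G : Subgroup PSL(2, ℝ)) (hG : G = Γ ⊓ Subgroup.map (MulAut.conj M⁻¹).toMonoidHom Γ)
    (π : ℍ → Quotient (MulAction.orbitRel Γ ℍ))
    (hπ : π = Quotient.mk (MulAction.orbitRel Γ ℍ))
    (X₀ : Set (Quotient (MulAction.orbitRel Γ ℍ))) (hX₀ : ¬ X₀.Countable)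
    (N : ℕ∞) (hN : N = ⨆ x ∈ X₀, ((fun τ : ℍ => π (M • τ)) '' (π ⁻¹' {x})).encard) :
    (N ≠ ⊤ ↔ G.relIndex Γ ≠ 0) ∧ (N ≠ ⊤ → N = (G.relIndex Γ : ℕ∞)) := by
  subst hG hπ
  set H := Subgroup.closure (insert M (Γ : Set PSL(2, ℝ)))
  have hΓH : Γ ≤ H := fun γ hγ => Subgroup.subset_closure (Set.mem_insert_of_mem M hγ)
  have hMH : M ∈ H := Subgroup.subset_closure (Set.mem_insert M _)
  obtain ⟨τ₀, hτ₀, hfree⟩ := exists_apply_mem_forall_smul_eq_self_imp_eq_one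
    (Subgroup.countable_closure ((PSL.countable_of_discreteTopology Γ).insert M))
    (fun g _ hg => (PSL.finite_setOf_smul_eq_self hg).countable) Quotient.mk_surjective hX₀
  have hNcard : N = ENat.card (Γ ⧸ (heckeSubgroup Γ M).subgroupOf Γ) :=
    hN.trans (iSup_encard_heckeImage_eq Γ M hΓH hMH hfree hτ₀)
  rw [hNcard]
  exact ⟨Subgroup.enatCard_quotient_ne_top_iff,
    fun h => Subgroup.enatCard_quotient_eq_index (Subgroup.enatCard_quotient_ne_top_iff.mp h)⟩
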